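/- Let Ω ⊆ ℝᵐ be a set of positive Lebesgue measure, let A : Ω → ℂ^{n×n} be a measurable, essentially bounded matrix function, let p ∈ (1,∞), and let φ, ψ ∈ (0,π/2) with φ ≠ ψ. Then Δ_p(A) ≤ ( Δ_p(e^{iφ}A)/sin φ − Δ_p(e^{iψ}A)/sin ψ ) / ( cot φ − cot ψ ). -/

import Mathlib

open scoped BigOperators ComplexConjugate Matrix

noncomputable section

namespace Paper

/-- The sesquilinear pairing `⟨z,w⟩ = ∑ j, z j * conj (w j)` on `ℂⁿ`. -/
def herm {n : ℕ} (z w : Fin n → ℂ) : ℂ := ∑ j, z j * conj (w j)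

/-- Euclidean norm of a complex vector, `|z| = √⟨z,z⟩`. -/
def cnorm {n : ℕ} (z : Fin n → ℂ) : ℝ := Real.sqrt (herm z z).re

/-- Componentwise complex conjugate of a vector. -/
def vconj {n : ℕ} (z : Fin n → ℂ) : Fin n → ℂ := fun j => conj (z j)

/-- The ℝ-linear map `𝒥_p(α + iβ) = α/p + iβ/q`, where `1/p + 1/q = 1`,
i.e. `1/q = 1 - 1/p`. -/
def Jmap {n : ℕ} (p : ℝ) (ξ : Fin n → ℂ) : Fin n → ℂ :=
  fun j => (((ξ j).re / p : ℝ) : ℂ) + Complex.I * (((ξ j).im * (1 - 1 / p) : ℝ) : ℂ)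

/-- `Δ_p(A) = 2 · min { Re⟨Aξ, 𝒥_p ξ⟩ : ξ ∈ ℂⁿ, |ξ| = 1 }`. -/
def Deltap {n : ℕ} (p : ℝ) (A : Matrix (Fin n) (Fin n) ℂ) : ℝ :=
  sInf {t : ℝ | ∃ ξ : Fin n → ℂ, cnorm ξ = 1 ∧
    t = 2 * (herm (A.mulVec ξ) (Jmap p ξ)).re}

/-- `Δ_r(A) = min { Re⟨Aξ,ξ⟩ − |1 − 2/r|·|⟨Aξ,ξ̄⟩| : |ξ| = 1 }`, the extension of
`Δ_p` to all `r > 0`. -/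
def DeltaGen {n : ℕ} (r : ℝ) (A : Matrix (Fin n) (Fin n) ℂ) : ℝ :=
  sInf {t : ℝ | ∃ ξ : Fin n → ℂ, cnorm ξ = 1 ∧
    t = (herm (A.mulVec ξ) ξ).re - |1 - 2 / r| * ‖(herm (A.mulVec ξ) (vconj ξ))‖}

/-- Membership in the class `𝒜_{λ,Λ}`:
`Re⟨Aξ,ξ⟩ ≥ λ|ξ|²` and `|⟨Aξ,η⟩| ≤ Λ|ξ||η|`. -/
def memA {n : ℕ} (lam Lam : ℝ) (A : Matrix (Fin n) (Fin n) ℂ) : Prop :=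
  (∀ ξ : Fin n → ℂ, lam * cnorm ξ ^ 2 ≤ (herm (A.mulVec ξ) ξ).re) ∧
  (∀ ξ η : Fin n → ℂ, ‖(herm (A.mulVec ξ) η)‖ ≤ Lam * cnorm ξ * cnorm η)

/-- `λ_A = min { Re⟨Aξ,ξ⟩ : |ξ| = 1 }`. -/
def lamA {n : ℕ} (A : Matrix (Fin n) (Fin n) ℂ) : ℝ :=
  sInf {t : ℝ | ∃ ξ : Fin n → ℂ, cnorm ξ = 1 ∧ t = (herm (A.mulVec ξ) ξ).re}

/-- `Λ_A = max { |⟨Aξ,η⟩| : |ξ| = |η| = 1 }`. -/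
def LamA {n : ℕ} (A : Matrix (Fin n) (Fin n) ℂ) : ℝ :=
  sSup {t : ℝ | ∃ ξ η : Fin n → ℂ, cnorm ξ = 1 ∧ cnorm η = 1 ∧
    t = ‖(herm (A.mulVec ξ) η)‖}

/-- `μ(A) = inf { Re⟨Aξ,ξ⟩/|⟨Aξ,ξ̄⟩| : ⟨Aξ,ξ̄⟩ ≠ 0 }`. -/
def muA {n : ℕ} (A : Matrix (Fin n) (Fin n) ℂ) : ℝ :=
  sInf {t : ℝ | ∃ ξ : Fin n → ℂ, herm (A.mulVec ξ) (vconj ξ) ≠ 0 ∧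
    t = (herm (A.mulVec ξ) ξ).re / ‖(herm (A.mulVec ξ) (vconj ξ))‖}

/-- Second real Fréchet derivative of `F : ℂ → ℝ` at `ζ`, as a bilinear expression. -/
def D2 (F : ℂ → ℝ) (ζ : ℂ) (ξ η : ℂ) : ℝ := fderiv ℝ (fderiv ℝ F) ζ ξ η

/-- `F : ℂ → ℝ` is twice real-Fréchet differentiable at `ζ`. -/
def TwiceDiffAt (F : ℂ → ℝ) (ζ : ℂ) : Prop :=
  DifferentiableAt ℝ F ζ ∧ DifferentiableAt ℝ (fderiv ℝ F) ζ

/-- `H_F^A[ζ;ξ] = ∑ j, D²F(ζ)[ξ_j, (Aξ)_j]`. -/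
def HFA {n : ℕ} (F : ℂ → ℝ) (A : Matrix (Fin n) (Fin n) ℂ) (ζ : ℂ) (ξ : Fin n → ℂ) : ℝ :=
  ∑ j, D2 F ζ (ξ j) (A.mulVec ξ j)

/-- The power function `F_r(ζ) = |ζ|^r`. -/
def Fpow (r : ℝ) (ζ : ℂ) : ℝ := ‖ζ‖ ^ r

/-- Real dot product. -/
def rdot {n : ℕ} (u v : Fin n → ℝ) : ℝ := ∑ j, u j * v j

/-- Euclidean norm of a real vector. -/
def enorm {n : ℕ} (u : Fin n → ℝ) : ℝ := Real.sqrt (∑ j, u j ^ 2)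

/-- Operator norm `‖M‖ = max { |Mu| : |u| = 1 }` of a real matrix. -/
def opnormR {n : ℕ} (M : Matrix (Fin n) (Fin n) ℝ) : ℝ :=
  sSup {t : ℝ | ∃ u : Fin n → ℝ, enorm u = 1 ∧ t = enorm (M.mulVec u)}

/-- Symmetric part `M_s = (M + Mᵀ)/2`. -/
def symPart {n : ℕ} {R : Type*} [Field R] (M : Matrix (Fin n) (Fin n) R) :
    Matrix (Fin n) (Fin n) R := (2 : R)⁻¹ • (M + Mᵀ)

/-- Antisymmetric part `M_a = (M − Mᵀ)/2`. -/
def antiPart {n : ℕ} {R : Type*} [Field R] (M : Matrix (Fin n) (Fin n) R) :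
    Matrix (Fin n) (Fin n) R := (2 : R)⁻¹ • (M - Mᵀ)

/-- `𝒱_p(V) = ((p−2)/(2√(p−1)))·V_s + (p/(2√(p−1)))·V_a`. -/
def Vmap {n : ℕ} (p : ℝ) (V : Matrix (Fin n) (Fin n) ℝ) : Matrix (Fin n) (Fin n) ℝ :=
  ((p - 2) / (2 * Real.sqrt (p - 1))) • symPart V + (p / (2 * Real.sqrt (p - 1))) • antiPart V

/-- A real matrix is (symmetric) positive definite. -/
def RPosDef {n : ℕ} (M : Matrix (Fin n) (Fin n) ℝ) : Prop :=
  Mᵀ = M ∧ ∀ u : Fin n → ℝ, u ≠ 0 → 0 < rdot (M.mulVec u) u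

/-- The complex matrix `U + iV` built from two real matrices. -/
def cplx {n : ℕ} (U V : Matrix (Fin n) (Fin n) ℝ) : Matrix (Fin n) (Fin n) ℂ :=
  Matrix.of fun i j => ((U i j : ℂ) + Complex.I * (V i j : ℂ))

/-- `Φ : ℂ×ℂ → ℝ` is twice real-Fréchet differentiable at `v`. -/
def TwiceDiffAt2 (Φ : ℂ × ℂ → ℝ) (v : ℂ × ℂ) : Prop :=
  DifferentiableAt ℝ Φ v ∧ DifferentiableAt ℝ (fderiv ℝ Φ) v

/-- `H_Φ^{(A,B)}[v;ω] = ∑ j, D²Φ(v)[(ω₁ⱼ, ω₂ⱼ), ((Aω₁)ⱼ, (Bω₂)ⱼ)]`. -/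
def HAB {n : ℕ} (Φ : ℂ × ℂ → ℝ) (A B : Matrix (Fin n) (Fin n) ℂ) (v : ℂ × ℂ)
    (ω₁ ω₂ : Fin n → ℂ) : ℝ :=
  ∑ j, fderiv ℝ (fderiv ℝ Φ) v (ω₁ j, ω₂ j) (A.mulVec ω₁ j, B.mulVec ω₂ j)

/-- The Nazarov–Treil Bellman function `Q_{p,δ}` (with `q = p/(p−1)` passed explicitly). -/
def QNT (p q δ : ℝ) (ζ η : ℂ) : ℝ :=
  ‖ζ‖ ^ p + ‖η‖ ^ q +
    δ * (if ‖ζ‖ ^ p ≤ ‖η‖ ^ q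
      then ‖ζ‖ ^ (2 : ℝ) * ‖η‖ ^ (2 - q)
      else (2 / p) * ‖ζ‖ ^ p + (2 / q - 1) * ‖η‖ ^ q)

/-- `Δ_p` of a matrix-valued function on a subset `Ω ⊆ ℝᵐ`:
`2 · essinf_{x∈Ω} min_{|ξ|=1} Re⟨A(x)ξ, 𝒥_p ξ⟩`. -/
def DeltapAE {m n : ℕ} (p : ℝ) (A : (Fin m → ℝ) → Matrix (Fin n) (Fin n) ℂ)
    (Ω : Set (Fin m → ℝ)) : ℝ :=
  2 * essInf (fun x => sInf {t : ℝ | ∃ ξ : Fin n → ℂ, cnorm ξ = 1 ∧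
      t = (herm ((A x).mulVec ξ) (Jmap p ξ)).re}) (MeasureTheory.volume.restrict Ω)

end Paper

/-! For a fixed unit vector `ξ`, `M ↦ Re⟨Mξ, 𝒥_p ξ⟩` is `ℝ`-linear. Taking the minimum over `ξ`
and then the essential infimum over `x` therefore makes `Δ_p` superadditive and positively
homogeneous on essentially bounded matrix functions. Applied to the identity
`sin ψ · e^{iφ} = sin (ψ - φ) + sin φ · e^{iψ}`, this gives, for `0 < φ < ψ < π`,
`sin (ψ - φ) Δ_p(A) + sin φ Δ_p(e^{iψ}A) ≤ sin ψ Δ_p(e^{iφ}A)`, which is the claim after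
dividing by `sin φ sin ψ`, because `cot φ - cot ψ = sin (ψ - φ) / (sin φ sin ψ)`. -/

open MeasureTheory Filter
open scoped Pointwise

section EssInf

variable {α : Type*} [MeasurableSpace α] {μ : Measure α}

theorem essInf_const_mul_of_pos {s : ℝ} (hs : 0 < s) (f : α → ℝ) :
    essInf (fun x => s * f x) μ = s * essInf f μ := by
  have hset : {a | μ {x | s * f x < a} = 0} = s • {a | μ {x | f x < a} = 0} := by
    ext a
    simp only [Set.mem_smul_set_iff_inv_smul_mem₀ hs.ne', Set.mem_ofPred_eq, smul_eq_mul,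
      lt_inv_mul_iff₀ hs]
  rw [essInf_eq_sSup, essInf_eq_sSup, hset, Real.sSup_smul_of_nonneg hs.le, smul_eq_mul]

theorem essInf_add_essInf_le_of_ae_le {f g h : α → ℝ}
    (hf : IsBoundedUnder (· ≥ ·) (ae μ) f) (hg : IsBoundedUnder (· ≥ ·) (ae μ) g)
    (hh : IsCoboundedUnder (· ≥ ·) (ae μ) h) (hfgh : ∀ᵐ x ∂μ, f x + g x ≤ h x) :
    essInf f μ + essInf g μ ≤ essInf h μ :=
  le_essInf_of_ae_le _ (by
    filter_upwards [ae_essInf_le hf, ae_essInf_le hg, hfgh] with x hfx hgx hx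
    exact (add_le_add hfx hgx).trans hx) hh

end EssInf

theorem abs_ciInf_le {ι : Sort*} {f : ι → ℝ} {K : ℝ} (hK : 0 ≤ K) (hf : ∀ i, |f i| ≤ K) :
    |⨅ i, f i| ≤ K := by
  cases isEmpty_or_nonempty ι with
  | inl _ => simpa [Real.iInf_of_isEmpty] using hK
  | inr _ =>
    obtain ⟨i⟩ := ‹Nonempty ι›
    have hbdd : BddBelow (Set.range f) := ⟨-K, by rintro _ ⟨j, rfl⟩; exact (abs_le.mp (hf j)).1⟩
    exact abs_le.mpr ⟨le_ciInf fun j => (abs_le.mp (hf j)).1,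
      (ciInf_le hbdd i).trans (abs_le.mp (hf i)).2⟩

theorem Real.sin_mul_exp_mul_I (φ ψ : ℝ) :
    (Real.sin ψ : ℂ) * Complex.exp (φ * Complex.I)
      = Real.sin (ψ - φ) + Real.sin φ * Complex.exp (ψ * Complex.I) := by
  apply Complex.ext <;>
    simp only [Complex.mul_re, Complex.mul_im, Complex.add_re, Complex.add_im,
      Complex.ofReal_re, Complex.ofReal_im, Complex.exp_ofReal_mul_I_re,
      Complex.exp_ofReal_mul_I_im, Real.sin_sub] <;> ring

theorem Real.le_div_cot_sub_cot_of_sin_sub_mul_add_le {φ ψ D X Y : ℝ} (hφ : 0 < φ)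
    (hφψ : φ < ψ) (hψ : ψ < Real.pi)
    (h : Real.sin (ψ - φ) * D + Real.sin φ * Y ≤ Real.sin ψ * X) :
    D ≤ (X / Real.sin φ - Y / Real.sin ψ) / (Real.cot φ - Real.cot ψ) := by
  have hsφ := Real.sin_pos_of_pos_of_lt_pi hφ (hφψ.trans hψ)
  have hsψ := Real.sin_pos_of_pos_of_lt_pi (hφ.trans hφψ) hψ
  have hsψφ := Real.sin_pos_of_pos_of_lt_pi (sub_pos.mpr hφψ) (by linarith)
  have hcot : Real.cot φ - Real.cot ψ = Real.sin (ψ - φ) / (Real.sin φ * Real.sin ψ) := by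
    rw [Real.cot_eq_cos_div_sin, Real.cot_eq_cos_div_sin, Real.sin_sub]
    field_simp
  rw [hcot, le_div_iff₀ (by positivity), div_sub_div _ _ hsφ.ne' hsψ.ne', mul_div_assoc',
    div_le_div_iff_of_pos_right (by positivity)]
  linarith

namespace Paper

variable {n : ℕ}

theorem herm_add_left (u v w : Fin n → ℂ) : herm (u + v) w = herm u w + herm v w := by
  simp only [herm, Pi.add_apply, add_mul, Finset.sum_add_distrib]

theorem herm_smul_left (c : ℂ) (v w : Fin n → ℂ) : herm (c • v) w = c * herm v w := by
  simp only [herm, Pi.smul_apply, smul_eq_mul, mul_assoc, Finset.mul_sum]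

theorem norm_herm_le (v w : Fin n → ℂ) : ‖herm v w‖ ≤ ∑ j, ‖v j‖ * ‖w j‖ :=
  (norm_sum_le _ _).trans_eq (by simp only [norm_mul, Complex.norm_conj])

theorem norm_le_one_of_cnorm_eq_one {ξ : Fin n → ℂ} (hξ : cnorm ξ = 1) (j : Fin n) :
    ‖ξ j‖ ≤ 1 := by
  have hsum : ∑ k, ‖ξ k‖ ^ 2 = 1 := by
    rw [cnorm, Real.sqrt_eq_one] at hξ
    rw [← hξ, herm, Complex.re_sum]
    simp only [Complex.mul_conj, Complex.normSq_eq_norm_sq, Complex.ofReal_re]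
  have hj : ‖ξ j‖ ^ 2 ≤ 1 :=
    hsum ▸ Finset.single_le_sum (fun k _ => sq_nonneg ‖ξ k‖) (Finset.mem_univ j)
  exact (sq_le_one_iff₀ (norm_nonneg _)).mp hj

theorem norm_Jmap_le (p : ℝ) (ξ : Fin n → ℂ) (j : Fin n) :
    ‖Jmap p ξ j‖ ≤ (|1 / p| + |1 - 1 / p|) * ‖ξ j‖ := by
  calc ‖Jmap p ξ j‖ ≤ |(ξ j).re / p| + |(ξ j).im * (1 - 1 / p)| := by
        refine (norm_add_le _ _).trans_eq ?_
        rw [norm_mul, Complex.norm_I, one_mul, Complex.norm_real, Complex.norm_real,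
          Real.norm_eq_abs, Real.norm_eq_abs]
    _ ≤ ‖ξ j‖ * |1 / p| + ‖ξ j‖ * |1 - 1 / p| := by
        rw [div_eq_mul_one_div, abs_mul, abs_mul]
        gcongr
        exacts [Complex.abs_re_le_norm _, Complex.abs_im_le_norm _]
    _ = (|1 / p| + |1 - 1 / p|) * ‖ξ j‖ := by ring

theorem norm_mulVec_le {M : Matrix (Fin n) (Fin n) ℂ} {C : ℝ} (hM : ∀ i j, ‖M i j‖ ≤ C)
    {ξ : Fin n → ℂ} (hξ : cnorm ξ = 1) (i : Fin n) : ‖(M *ᵥ ξ) i‖ ≤ n * C :=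
  calc ‖(M *ᵥ ξ) i‖ ≤ ∑ j, ‖M i j‖ * ‖ξ j‖ :=
        (norm_sum_le _ fun j => M i j * ξ j).trans_eq (by simp only [norm_mul])
    _ ≤ ∑ _j : Fin n, C := Finset.sum_le_sum fun j _ =>
        (mul_le_of_le_one_right (norm_nonneg _) (norm_le_one_of_cnorm_eq_one hξ j)).trans
          (hM i j)
    _ = n * C := by simp

def jForm (p : ℝ) (M : Matrix (Fin n) (Fin n) ℂ) (ξ : Fin n → ℂ) : ℝ :=
  (herm (M *ᵥ ξ) (Jmap p ξ)).re

-- For `n = 0` the unit sphere is empty and this infimum takes the junk value `0`.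
def minJForm (p : ℝ) (M : Matrix (Fin n) (Fin n) ℂ) : ℝ :=
  ⨅ ξ : {ξ : Fin n → ℂ // cnorm ξ = 1}, jForm p M ξ

theorem jForm_add (p : ℝ) (M N : Matrix (Fin n) (Fin n) ℂ) (ξ : Fin n → ℂ) :
    jForm p (M + N) ξ = jForm p M ξ + jForm p N ξ := by
  rw [jForm, Matrix.add_mulVec, herm_add_left, Complex.add_re, jForm, jForm]

theorem jForm_real_smul (p s : ℝ) (M : Matrix (Fin n) (Fin n) ℂ) (ξ : Fin n → ℂ) :
    jForm p ((s : ℂ) • M) ξ = s * jForm p M ξ := by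
  rw [jForm, Matrix.smul_mulVec, herm_smul_left, Complex.re_ofReal_mul, jForm]

theorem abs_jForm_le (p : ℝ) {M : Matrix (Fin n) (Fin n) ℂ} {C : ℝ} (hM : ∀ i j, ‖M i j‖ ≤ C)
    {ξ : Fin n → ℂ} (hξ : cnorm ξ = 1) :
    |jForm p M ξ| ≤ n * (n * C * (|1 / p| + |1 - 1 / p|)) :=
  calc |jForm p M ξ| ≤ ∑ j, ‖(M *ᵥ ξ) j‖ * ‖Jmap p ξ j‖ :=
        (Complex.abs_re_le_norm _).trans (norm_herm_le _ _)
    _ ≤ ∑ _j : Fin n, n * C * (|1 / p| + |1 - 1 / p|) := Finset.sum_le_sum fun j _ => by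
        have hMξ := norm_mulVec_le hM hξ j
        refine mul_le_mul hMξ ?_ (norm_nonneg _) ((norm_nonneg _).trans hMξ)
        exact (norm_Jmap_le p ξ j).trans
          (mul_le_of_le_one_right (by positivity) (norm_le_one_of_cnorm_eq_one hξ j))
    _ = n * (n * C * (|1 / p| + |1 - 1 / p|)) := by simp

theorem bddBelow_range_jForm (p : ℝ) {M : Matrix (Fin n) (Fin n) ℂ} {C : ℝ}
    (hM : ∀ i j, ‖M i j‖ ≤ C) :
    BddBelow (Set.range fun ξ : {ξ : Fin n → ℂ // cnorm ξ = 1} => jForm p M ξ) := by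
  refine ⟨-(n * (n * C * (|1 / p| + |1 - 1 / p|))), ?_⟩
  rintro _ ⟨ξ, rfl⟩
  exact (abs_le.mp (abs_jForm_le p hM ξ.2)).1

theorem abs_minJForm_le (p : ℝ) {M : Matrix (Fin n) (Fin n) ℂ} {C : ℝ} (hC : 0 ≤ C)
    (hM : ∀ i j, ‖M i j‖ ≤ C) :
    |minJForm p M| ≤ n * (n * C * (|1 / p| + |1 - 1 / p|)) :=
  abs_ciInf_le (by positivity) fun ξ => abs_jForm_le p hM ξ.2

theorem minJForm_add_minJForm_le (p : ℝ) {M N : Matrix (Fin n) (Fin n) ℂ} {C D : ℝ}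
    (hM : ∀ i j, ‖M i j‖ ≤ C) (hN : ∀ i j, ‖N i j‖ ≤ D) :
    minJForm p M + minJForm p N ≤ minJForm p (M + N) := by
  cases isEmpty_or_nonempty {ξ : Fin n → ℂ // cnorm ξ = 1} with
  | inl _ => simp [minJForm, Real.iInf_of_isEmpty]
  | inr _ =>
    refine le_ciInf fun ξ => ?_
    rw [jForm_add]
    exact add_le_add (ciInf_le (bddBelow_range_jForm p hM) ξ)
      (ciInf_le (bddBelow_range_jForm p hN) ξ)

theorem minJForm_real_smul (p : ℝ) {s : ℝ} (hs : 0 ≤ s) (M : Matrix (Fin n) (Fin n) ℂ) :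
    minJForm p ((s : ℂ) • M) = s * minJForm p M := by
  simp only [minJForm, jForm_real_smul, Real.mul_iInf_of_nonneg hs]

section AEBounded

variable {α : Type*} [MeasurableSpace α] {μ : Measure α}

def AEBoundedEntries (μ : Measure α) (A : α → Matrix (Fin n) (Fin n) ℂ) : Prop :=
  ∃ C : ℝ, ∀ᵐ x ∂μ, ∀ i j, ‖A x i j‖ ≤ C

theorem AEBoundedEntries.add {A B : α → Matrix (Fin n) (Fin n) ℂ} (hA : AEBoundedEntries μ A)
    (hB : AEBoundedEntries μ B) : AEBoundedEntries μ fun x => A x + B x := by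
  obtain ⟨C, hC⟩ := hA
  obtain ⟨D, hD⟩ := hB
  refine ⟨C + D, ?_⟩
  filter_upwards [hC, hD] with x hCx hDx i j
  exact (norm_add_le _ _).trans (add_le_add (hCx i j) (hDx i j))

theorem AEBoundedEntries.const_smul {A : α → Matrix (Fin n) (Fin n) ℂ}
    (hA : AEBoundedEntries μ A) (c : ℂ) : AEBoundedEntries μ fun x => c • A x := by
  obtain ⟨C, hC⟩ := hA
  refine ⟨‖c‖ * C, ?_⟩
  filter_upwards [hC] with x hCx i j
  rw [Matrix.smul_apply, smul_eq_mul, norm_mul]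
  exact mul_le_mul_of_nonneg_left (hCx i j) (norm_nonneg c)

theorem AEBoundedEntries.exists_abs_minJForm_le {A : α → Matrix (Fin n) (Fin n) ℂ}
    (hA : AEBoundedEntries μ A) (p : ℝ) : ∃ K : ℝ, ∀ᵐ x ∂μ, |minJForm p (A x)| ≤ K := by
  obtain ⟨C, hC⟩ := hA
  refine ⟨_, hC.mono fun x hCx =>
    abs_minJForm_le p (le_max_right C 0) fun i j => (hCx i j).trans (le_max_left C 0)⟩

theorem AEBoundedEntries.ae_minJForm_add_minJForm_le {A B : α → Matrix (Fin n) (Fin n) ℂ}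
    (hA : AEBoundedEntries μ A) (hB : AEBoundedEntries μ B) (p : ℝ) :
    ∀ᵐ x ∂μ, minJForm p (A x) + minJForm p (B x) ≤ minJForm p (A x + B x) := by
  obtain ⟨C, hC⟩ := hA
  obtain ⟨D, hD⟩ := hB
  filter_upwards [hC, hD] with x hCx hDx
  exact minJForm_add_minJForm_le p hCx hDx

end AEBounded

section DeltapAE

variable {m : ℕ} {p : ℝ} {Ω : Set (Fin m → ℝ)}

theorem DeltapAE_eq (A : (Fin m → ℝ) → Matrix (Fin n) (Fin n) ℂ) :
    DeltapAE p A Ω = 2 * essInf (fun x => minJForm p (A x)) (volume.restrict Ω) := by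
  unfold DeltapAE minJForm iInf
  congr 3 with x
  congr 1 with t
  constructor
  · rintro ⟨ξ, hξ, rfl⟩
    exact ⟨⟨ξ, hξ⟩, rfl⟩
  · rintro ⟨ξ, rfl⟩
    exact ⟨ξ.1, ξ.2, rfl⟩

theorem DeltapAE_real_smul {s : ℝ} (hs : 0 < s) (A : (Fin m → ℝ) → Matrix (Fin n) (Fin n) ℂ) :
    DeltapAE p (fun x => (s : ℂ) • A x) Ω = s * DeltapAE p A Ω := by
  simp only [DeltapAE_eq, minJForm_real_smul p hs.le, essInf_const_mul_of_pos hs]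
  ring

theorem DeltapAE_add_DeltapAE_le (hΩ : volume Ω ≠ 0)
    {A B : (Fin m → ℝ) → Matrix (Fin n) (Fin n) ℂ}
    (hA : AEBoundedEntries (volume.restrict Ω) A) (hB : AEBoundedEntries (volume.restrict Ω) B) :
    DeltapAE p A Ω + DeltapAE p B Ω ≤ DeltapAE p (fun x => A x + B x) Ω := by
  have : (ae (volume.restrict Ω)).NeBot := ae_neBot.mpr (Measure.restrict_eq_zero.not.mpr hΩ)
  obtain ⟨KA, hKA⟩ := hA.exists_abs_minJForm_le p
  obtain ⟨KB, hKB⟩ := hB.exists_abs_minJForm_le p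
  obtain ⟨KAB, hKAB⟩ := (hA.add hB).exists_abs_minJForm_le p
  have hsum := essInf_add_essInf_le_of_ae_le
    (isBoundedUnder_of_eventually_ge (hKA.mono fun x hx => (abs_le.mp hx).1))
    (isBoundedUnder_of_eventually_ge (hKB.mono fun x hx => (abs_le.mp hx).1))
    (isBoundedUnder_of_eventually_le
      (hKAB.mono fun x hx => (abs_le.mp hx).2)).isCoboundedUnder_flip
    (hA.ae_minJForm_add_minJForm_le hB p)
  simp only [DeltapAE_eq]
  linarith

theorem sin_sub_mul_DeltapAE_add_le (hΩ : volume Ω ≠ 0)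
    {A : (Fin m → ℝ) → Matrix (Fin n) (Fin n) ℂ} (hA : AEBoundedEntries (volume.restrict Ω) A)
    {φ ψ : ℝ} (hφ : 0 < φ) (hφψ : φ < ψ) (hψ : ψ < Real.pi) :
    Real.sin (ψ - φ) * DeltapAE p A Ω
        + Real.sin φ * DeltapAE p (fun x => Complex.exp (ψ * Complex.I) • A x) Ω
      ≤ Real.sin ψ * DeltapAE p (fun x => Complex.exp (φ * Complex.I) • A x) Ω := by
  have hsφ := Real.sin_pos_of_pos_of_lt_pi hφ (hφψ.trans hψ)
  have hsψ := Real.sin_pos_of_pos_of_lt_pi (hφ.trans hφψ) hψ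
  have hsψφ := Real.sin_pos_of_pos_of_lt_pi (sub_pos.mpr hφψ) (by linarith)
  have hrot : ∀ x, (Real.sin ψ : ℂ) • Complex.exp (φ * Complex.I) • A x
      = (Real.sin (ψ - φ) : ℂ) • A x + (Real.sin φ : ℂ) • Complex.exp (ψ * Complex.I) • A x := by
    intro x
    rw [smul_smul, smul_smul, Real.sin_mul_exp_mul_I, add_smul]
  rw [← DeltapAE_real_smul hsψφ, ← DeltapAE_real_smul hsφ, ← DeltapAE_real_smul hsψ]
  simp only [hrot]
  exact DeltapAE_add_DeltapAE_le hΩ (hA.const_smul _) ((hA.const_smul _).const_smul _)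

end DeltapAE

end Paper

theorem statement14_general (m n : ℕ) (Ω : Set (Fin m → ℝ))
    (hΩ : 0 < MeasureTheory.volume Ω)
    (A : (Fin m → ℝ) → Matrix (Fin n) (Fin n) ℂ)
    (hbdd : ∃ C : ℝ, ∀ᵐ x ∂(MeasureTheory.volume.restrict Ω),
      ∀ i j, ‖(A x i j)‖ ≤ C)
    (p : ℝ)
    (φ ψ : ℝ) (hφ : φ ∈ Set.Ioo 0 (Real.pi / 2)) (hψ : ψ ∈ Set.Ioo 0 (Real.pi / 2))
    (hfp : φ ≠ ψ) :
    Paper.DeltapAE p A Ω ≤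
      (Paper.DeltapAE p (fun x => Complex.exp (φ * Complex.I) • A x) Ω / Real.sin φ
        - Paper.DeltapAE p (fun x => Complex.exp (ψ * Complex.I) • A x) Ω / Real.sin ψ)
      / (Real.cot φ - Real.cot ψ) := by
  wlog hφψ : φ < ψ generalizing φ ψ
  · have hψφ := this ψ φ hψ hφ hfp.symm (lt_of_le_of_ne (not_lt.mp hφψ) hfp.symm)
    rwa [← neg_div_neg_eq, neg_sub, neg_sub] at hψφ
  have hψπ : ψ < Real.pi := by linarith [hψ.2, Real.pi_pos]
  exact Real.le_div_cot_sub_cot_of_sin_sub_mul_add_le hφ.1 hφψ hψπ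
    (Paper.sin_sub_mul_DeltapAE_add_le hΩ.ne' hbdd hφ.1 hφψ hψπ)

/-- `Δ_p(A) ≤ (Δ_p(e^{iφ}A)/sin φ − Δ_p(e^{iψ}A)/sin ψ)/(cot φ − cot ψ)`. -/
theorem statement14 (m n : ℕ) (Ω : Set (Fin m → ℝ))
    (hΩ : 0 < MeasureTheory.volume Ω)
    (A : (Fin m → ℝ) → Matrix (Fin n) (Fin n) ℂ) (hmeas : ∀ i j, Measurable (fun x => A x i j))
    (hbdd : ∃ C : ℝ, ∀ᵐ x ∂(MeasureTheory.volume.restrict Ω),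
      ∀ i j, ‖(A x i j)‖ ≤ C)
    (p : ℝ) (hp : 1 < p)
    (φ ψ : ℝ) (hφ : φ ∈ Set.Ioo 0 (Real.pi / 2)) (hψ : ψ ∈ Set.Ioo 0 (Real.pi / 2))
    (hfp : φ ≠ ψ) :
    Paper.DeltapAE p A Ω ≤
      (Paper.DeltapAE p (fun x => Complex.exp (φ * Complex.I) • A x) Ω / Real.sin φ
        - Paper.DeltapAE p (fun x => Complex.exp (ψ * Complex.I) • A x) Ω / Real.sin ψ)
      / (Real.cot φ - Real.cot ψ) :=
  statement14_general m n Ω hΩ A hbdd p φ ψ hφ hψ hfp
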